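/- Let λ ∈ ℤ^n and suppose λ ∈ Λ_ℤ^{+,×}, i.e., λ_1 > ⋯ > λ_n with all λ_i nonzero. If μ ∈ ℤ^n satisfies μ ≻ λ in the type-B Bruhat ordering (defined analogously via wt_r with simple roots α_0 = -δ_1, α_i = δ_i - δ_{i+1}), and μ is also strictly decreasing, then all μ_i are nonzero and sgn(μ) has the same number of positive entries as sgn(λ). -/
import Mathlib


noncomputable section
open Finset

/-- The lattice `P^b`: free abelian group on `δ_a`, `a ∈ ℤ_{>0}`. -/
abbrev PlatB : Type := {a : ℤ // 0 < a} →₀ ℤ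

/-- `δ_a ∈ P^b` for any `a ∈ ℤ`, with `δ_{-a} = -δ_a` and `δ_0 = 0`. -/
def deltaB (a : ℤ) : PlatB :=
  if h : 0 < a then Finsupp.single ⟨a, h⟩ 1
  else if h' : a < 0 then - Finsupp.single ⟨-a, by omega⟩ 1
  else 0

/-- Type-`B` simple roots: `α_0 = -δ_1`, `α_i = δ_i - δ_{i+1}` for `i ≥ 1`. -/
def alphaB : ℕ → PlatB
  | 0 => -deltaB 1
  | (i + 1) => deltaB (i + 1) - deltaB (i + 2)

/-- `Q^+`: nonnegative span of the type-`B` simple roots. -/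
def QplusB : AddSubmonoid PlatB := AddSubmonoid.closure (Set.range alphaB)

/-- `wt_r(λ) = Σ_{i=r}^n δ_{λ_i}`. -/
def wtB (n : ℕ) (r : Fin n) (lam : Fin n → ℤ) : PlatB :=
  ∑ i ∈ Finset.univ.filter (fun i : Fin n => r ≤ i), deltaB (lam i)

/-- Type-`B` Bruhat ordering: `λ ⪰ μ` iff `wt_1(λ) = wt_1(μ)` and
`wt_r(λ) - wt_r(μ) ∈ Q^+` for all `r`. -/
def succeqB (n : ℕ) (lam mu : Fin n → ℤ) : Prop :=
  (∑ i, deltaB (lam i)) = (∑ i, deltaB (mu i)) ∧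
    ∀ r : Fin n, wtB n r lam - wtB n r mu ∈ QplusB

def SB : PlatB →+ ℤ := Finsupp.liftAddHom (fun _ => AddMonoidHom.id ℤ)

lemma SB_delta (a : ℤ) : SB (deltaB a) = Int.sign a := by
  unfold SB deltaB
  split_ifs with h h'
  · simp [Finsupp.liftAddHom_apply_single, Int.sign_eq_one_iff_pos.mpr h]
  · rw [map_neg]; simp [Finsupp.liftAddHom_apply_single, Int.sign_eq_neg_one_iff_neg.mpr h']
  · have : a = 0 := by omega
    simp [this]

lemma signSum (n : ℕ) (f : Fin n → ℤ) :
    ∑ i, Int.sign (f i) =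
      ((Finset.univ.filter (fun i => 0 < f i)).card : ℤ)
        - ((Finset.univ.filter (fun i => f i < 0)).card : ℤ) := by
  rw [← Finset.sum_boole, ← Finset.sum_boole, ← Finset.sum_sub_distrib]
  apply Finset.sum_congr rfl
  intro i _
  rcases lt_trichotomy (f i) 0 with h | h | h
  · simp [h, not_lt.mpr h.le, Int.sign_eq_neg_one_iff_neg.mpr h]
  · simp [h]
  · simp [h, not_lt.mpr h.le, Int.sign_eq_one_iff_pos.mpr h]

/-- If `λ ∈ Λ_ℤ^{+,×}` (strictly decreasing, all entries nonzero) and `μ` is strictly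
decreasing with `μ ≻ λ` in the type-`B` Bruhat ordering, then all entries of `μ` are
nonzero and `μ` has the same number of positive entries as `λ`. -/
theorem bruhat_preserves_signature (n : ℕ) (hn : 1 ≤ n) (lam mu : Fin n → ℤ)
    (hlam_dec : ∀ i j : Fin n, i < j → lam j < lam i)
    (hlam_ne : ∀ i, lam i ≠ 0)
    (hmu_dec : ∀ i j : Fin n, i < j → mu j < mu i)
    (hgt : succeqB n mu lam ∧ mu ≠ lam) :
    (∀ i, mu i ≠ 0) ∧
    (Finset.univ.filter (fun i => 0 < mu i)).card
      = (Finset.univ.filter (fun i => 0 < lam i)).card := by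
  have key : ∑ i, Int.sign (mu i) = ∑ i, Int.sign (lam i) := by
    have h := congrArg SB hgt.1.1
    rw [map_sum, map_sum] at h
    simpa [SB_delta] using h
  rw [signSum, signSum] at key
  set Pl := (Finset.univ.filter (fun i => 0 < lam i)).card with hPl
  set Nl := (Finset.univ.filter (fun i => lam i < 0)).card with hNl
  set Pm := (Finset.univ.filter (fun i => 0 < mu i)).card with hPm
  set Nm := (Finset.univ.filter (fun i => mu i < 0)).card with hNm
  set Zm := (Finset.univ.filter (fun i => mu i = 0)).card with hZm
  -- counting identities
  have hlcount : (Pl : ℤ) + Nl = n := by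
    have h1 : ∑ i : Fin n, ((if 0 < lam i then (1:ℤ) else 0) + (if lam i < 0 then 1 else 0))
        = ∑ _i : Fin n, (1:ℤ) :=
      Finset.sum_congr rfl (fun i _ => by have := hlam_ne i; split_ifs <;> omega)
    rw [Finset.sum_add_distrib, Finset.sum_boole, Finset.sum_boole] at h1
    simpa using h1
  have hmcount : (Pm : ℤ) + Nm + Zm = n := by
    have h1 : ∑ i : Fin n, ((if 0 < mu i then (1:ℤ) else 0) + (if mu i < 0 then 1 else 0)
          + (if mu i = 0 then 1 else 0))
        = ∑ _i : Fin n, (1:ℤ) :=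
      Finset.sum_congr rfl (fun i _ => by split_ifs <;> omega)
    rw [Finset.sum_add_distrib, Finset.sum_add_distrib, Finset.sum_boole, Finset.sum_boole,
      Finset.sum_boole] at h1
    simpa using h1
  have hZle : Zm ≤ 1 := by
    rw [hZm]
    apply Finset.card_le_one.mpr
    intro a ha b hb
    simp only [Finset.mem_filter] at ha hb
    by_contra hab
    rcases lt_or_gt_of_ne hab with h | h
    · have := hmu_dec a b h; omega
    · have := hmu_dec b a h; omega
  have hZ0 : Zm = 0 ∧ Pm = Pl := by omega
  constructor
  · intro i hi
    have : i ∈ Finset.univ.filter (fun i => mu i = 0) := by simp [hi]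
    have := Finset.card_pos.mpr ⟨i, this⟩
    omega
  · exact hZ0.2
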